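/- arXiv:2306.11138 — 2 statements merged into one kernel-verified Lean document; each statement's English description precedes it below -/
import Mathlib

section
/- Let A be a tridiagonal bounded operator on ℓ²(ℤ,ℂ) with diagonals α, β, γ ∈ ℓ^∞(ℤ) and let ν_n(A) := inf{‖Ax‖ : ‖x‖ = 1 and supp x ⊆ k + {1,…,n} for some k ∈ ℤ}. Then ν_n(A) converges to ν(A) as n → ∞. -/
noncomputable section

/-- The lower norm `ν(B) = inf {‖Bx‖ : ‖x‖ = 1}` of a bounded operator. -/
def lowerNorm {E F : Type*} [NormedAddCommGroup E] [NormedAddCommGroup F]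
    [NormedSpace ℂ E] [NormedSpace ℂ F] (B : E →L[ℂ] F) : ℝ :=
  sInf {r : ℝ | ∃ x : E, ‖x‖ = 1 ∧ r = ‖B x‖}

abbrev L2Z : Type := lp (fun _ : ℤ => ℂ) 2

/-- Matrix entry `A_{i,j} = ⟨e_i, A e_j⟩` of an operator on `ℓ²(ℤ)`. -/
def ent (A : L2Z →L[ℂ] L2Z) (i j : ℤ) : ℂ :=
  (inner ℂ (lp.single 2 i (1:ℂ)) (A (lp.single 2 j 1)) : ℂ)

/-- `A` is tridiagonal with subdiagonal α, main diagonal β and superdiagonal γ. -/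
def IsTridiag (A : L2Z →L[ℂ] L2Z) (α β γ : lp (fun _ : ℤ => ℂ) ⊤) : Prop :=
  (∀ i : ℤ, ent A (i+1) i = α i) ∧ (∀ i : ℤ, ent A i i = β i) ∧
    (∀ i : ℤ, ent A (i-1) i = γ i) ∧ ∀ i j : ℤ, 1 < |i - j| → ent A i j = 0

/-- `ε_n = 2(‖α‖_∞ + ‖γ‖_∞) sin(π/(2(n+1)))`. -/
def epsn (α γ : lp (fun _ : ℤ => ℂ) ⊤) (n : ℕ) : ℝ :=
  2 * (‖α‖ + ‖γ‖) * Real.sin (Real.pi / (2 * (n + 1)))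

/-- `ν_n(A) = inf {‖Ax‖ : ‖x‖ = 1, supp x ⊆ k + {1,…,n} for some k ∈ ℤ}`. -/
def nuN (A : L2Z →L[ℂ] L2Z) (n : ℕ) : ℝ :=
  sInf {r : ℝ | ∃ (x : L2Z) (k : ℤ), ‖x‖ = 1 ∧
    (∀ i : ℤ, x i ≠ 0 → k < i ∧ i ≤ k + n) ∧ r = ‖A x‖}

/-!
Restricting the infimum can only increase it, so `ν ≤ ν_n`. Conversely, cut a unit vector `x`
into the windows `x_k = P_k x`, where `P_k` is the coordinate projection onto `k + {1,…,n}`.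
Each coordinate lies in exactly `n` windows, so `∑ₖ ‖x_k‖² = n`. Since `A` is tridiagonal, the
commutator `A P_k - P_k A` has only four nonzero entries, and Minkowski's inequality gives
`∑ₖ ‖A x_k‖² ≤ (√n ‖A x‖ + 4 (‖α‖ + ‖γ‖))²`. Hence some window has
`‖A x_k‖ ≤ (‖A x‖ + 4 (‖α‖ + ‖γ‖) / √n) ‖x_k‖`, that is `ν_n ≤ ν + 4 (‖α‖ + ‖γ‖) / √n`.
-/

open Filter Topology

section Summation

variable {ι : Type*}

theorem Real.L2_add_le_tsum_of_nonneg {f g : ι → ℝ} (hf₀ : ∀ i, 0 ≤ f i) (hg₀ : ∀ i, 0 ≤ g i)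
    (hf : Summable fun i => f i ^ 2) (hg : Summable fun i => g i ^ 2) :
    (Summable fun i => (f i + g i) ^ 2) ∧
      √(∑' i, (f i + g i) ^ 2) ≤ √(∑' i, f i ^ 2) + √(∑' i, g i ^ 2) := by
  have := Real.Lp_add_le_tsum_of_nonneg (p := 2) one_le_two hf₀ hg₀
    (by simpa only [Real.rpow_two] using hf) (by simpa only [Real.rpow_two] using hg)
  simpa only [Real.rpow_two, ← Real.sqrt_eq_rpow] using this

theorem exists_pos_le_mul_of_hasSum {f g : ι → ℝ} {a b c : ℝ} (hf₀ : ∀ i, 0 ≤ f i)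
    (hg₀ : ∀ i, 0 ≤ g i) (hf : HasSum f a) (hg : HasSum g b) (ha : 0 < a) (hb : b ≤ c * a) :
    ∃ i, 0 < f i ∧ g i ≤ c * f i := by
  by_contra! H
  obtain ⟨i, hi⟩ : ∃ i, 0 < f i := by
    by_contra! h
    have hf_zero : f = 0 := funext fun i => le_antisymm (h i) (hf₀ i)
    exact ha.ne' (hf.unique (hf_zero ▸ hasSum_zero))
  have hle : ∀ j, c * f j ≤ g j := fun j => by
    rcases (hf₀ j).eq_or_lt with h | h
    · rw [← h, mul_zero]; exact hg₀ j
    · exact (H j h).le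
  exact (hasSum_lt hle (H i hi) (hf.mul_left c) hg).not_ge hb

end Summation

theorem lp.hasSum_norm_sq {ι : Type*} {E : ι → Type*} [∀ i, NormedAddCommGroup (E i)]
    (f : lp E 2) : HasSum (fun i => ‖f i‖ ^ 2) (‖f‖ ^ 2) := by
  simpa using lp.hasSum_norm (p := 2) (by norm_num) f

theorem lp.hasSum_norm_sq_comp_add {G E : Type*} [AddGroup G] [NormedAddCommGroup E]
    (f : lp (fun _ : G => E) 2) (m : G) : HasSum (fun k => ‖f (k + m)‖ ^ 2) (‖f‖ ^ 2) :=
  (Equiv.addRight m).hasSum_iff (f := fun i => ‖f i‖ ^ 2) |>.mpr (lp.hasSum_norm_sq f)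

theorem lp.tsum_sq_sum_norm_comp_add_le {G E ι : Type*} [AddGroup G] [NormedAddCommGroup E]
    (f : lp (fun _ : G => E) 2) (s : Finset ι) (m : ι → G) :
    (Summable fun k => (∑ j ∈ s, ‖f (k + m j)‖) ^ 2) ∧
      ∑' k, (∑ j ∈ s, ‖f (k + m j)‖) ^ 2 ≤ (s.card * ‖f‖) ^ 2 := by
  have hdom := (hasSum_sum (s := s) fun j _ => lp.hasSum_norm_sq_comp_add f (m j)).mul_left
    (s.card : ℝ)
  rw [Finset.sum_const, nsmul_eq_mul] at hdom
  have hle : ∀ k, (∑ j ∈ s, ‖f (k + m j)‖) ^ 2 ≤ s.card * ∑ j ∈ s, ‖f (k + m j)‖ ^ 2 :=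
    fun k => sq_sum_le_card_mul_sum_sq
  have hsum := hdom.summable.of_nonneg_of_le (fun k => sq_nonneg _) hle
  exact ⟨hsum, (hasSum_le hle hsum.hasSum hdom).trans_eq (by ring)⟩

def window (n : ℕ) (k : ℤ) (x : L2Z) : L2Z :=
  ∑ i ∈ Finset.Ioc k (k + n), lp.single 2 i (x i)

theorem window_apply (n : ℕ) (k : ℤ) (x : L2Z) (i : ℤ) :
    window n k x i = if k < i ∧ i ≤ k + n then x i else 0 := by
  rw [window, lp.coeFn_sum, Finset.sum_apply]
  simp

theorem norm_window_sq (n : ℕ) (k : ℤ) (x : L2Z) :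
    ‖window n k x‖ ^ 2 = ∑ m ∈ Finset.Ioc (0 : ℤ) n, ‖x (k + m)‖ ^ 2 := by
  have := lp.norm_sum_single (p := 2) (by norm_num) x (Finset.Ioc k (k + n))
  simp only [ENNReal.toReal_ofNat, Real.rpow_two] at this
  rw [window, this, show Finset.Ioc k (k + n) = (Finset.Ioc 0 (n : ℤ)).map (addLeftEmbedding k) by
    simp [Finset.map_add_left_Ioc], Finset.sum_map]
  rfl

theorem hasSum_norm_window_sq (n : ℕ) (x : L2Z) :
    HasSum (fun k => ‖window n k x‖ ^ 2) (n * ‖x‖ ^ 2) := by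
  simp only [norm_window_sq]
  convert hasSum_sum fun m _ => lp.hasSum_norm_sq_comp_add x m
  simp

theorem window_support_subset (n : ℕ) (k : ℤ) (x : L2Z) :
    ∀ i, window n k x i ≠ 0 → k < i ∧ i ≤ k + n := fun i hi => by
  rw [window_apply] at hi
  by_contra h
  exact hi (if_neg h)

theorem nuN_le_norm_apply_div_norm (A : L2Z →L[ℂ] L2Z) {n : ℕ} {k : ℤ} {w : L2Z} (hw : w ≠ 0)
    (hsupp : ∀ i, w i ≠ 0 → k < i ∧ i ≤ k + n) : nuN A n ≤ ‖A w‖ / ‖w‖ := by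
  have hw' : ‖w‖ ≠ 0 := norm_ne_zero_iff.mpr hw
  refine csInf_le ⟨0, fun r ⟨_, _, _, _, hr⟩ => hr ▸ norm_nonneg _⟩
    ⟨(‖w‖⁻¹ : ℂ) • w, k, ?_, fun i hi => hsupp i (right_ne_zero_of_mul hi), ?_⟩
  · rw [norm_smul, norm_inv, Complex.norm_real, norm_norm, inv_mul_cancel₀ hw']
  · rw [map_smul, norm_smul, norm_inv, Complex.norm_real, norm_norm, inv_mul_eq_div]

theorem lowerNorm_le_nuN (A : L2Z →L[ℂ] L2Z) {n : ℕ} (hn : 1 ≤ n) : lowerNorm A ≤ nuN A n := by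
  refine csInf_le_csInf ⟨0, fun r ⟨_, _, hr⟩ => hr ▸ norm_nonneg _⟩ ?_
    fun r ⟨x, _, hx, _, hr⟩ => ⟨x, hx, hr⟩
  refine ⟨_, lp.single 2 1 1, 0, by simp, fun i hi => ?_, rfl⟩
  have : i = 1 := by_contra fun h => hi (lp.single_apply_ne 2 1 _ h)
  omega

theorem ent_eq_apply (A : L2Z →L[ℂ] L2Z) (i j : ℤ) : ent A i j = A (lp.single 2 j 1) i := by
  simp [ent, lp.inner_single_left]

namespace IsTridiag

variable {A : L2Z →L[ℂ] L2Z} {α β γ : lp (fun _ : ℤ => ℂ) ⊤}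

theorem apply_apply (hA : IsTridiag A α β γ) (x : L2Z) (i : ℤ) :
    A x i = α (i - 1) * x (i - 1) + β i * x i + γ (i + 1) * x (i + 1) := by
  have hsum : HasSum (fun j => ent A i j * x j) (A x i) := by
    have hentry : ∀ j, (lp.evalCLM ℂ (fun _ : ℤ => ℂ) 2 i).comp A (lp.single 2 j (x j)) =
        ent A i j * x j := fun j => by
      have hsingle : lp.single 2 j (x j) = x j • (lp.single 2 j 1 : L2Z) := by
        rw [← lp.single_smul, smul_eq_mul, mul_one]
      rw [hsingle, map_smul, ent_eq_apply]
      simp [lp.evalCLM, mul_comm]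
    have h := ((lp.evalCLM ℂ (fun _ : ℤ => ℂ) 2 i).comp A).hasSum
      (lp.hasSum_single (by norm_num) x)
    simp only [hentry] at h
    exact h
  have hzero : ∀ j ∉ ({i - 1, i, i + 1} : Finset ℤ), ent A i j * x j = 0 := fun j hj => by
    simp only [Finset.mem_insert, Finset.mem_singleton] at hj
    rw [hA.2.2.2 i j (by rw [lt_abs]; omega), zero_mul]
  rw [hsum.unique (hasSum_sum_of_ne_finset_zero hzero), Finset.sum_insert (by simp; omega),
    Finset.sum_insert (by simp), Finset.sum_singleton, add_assoc]
  have h₁ := hA.1 (i - 1)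
  have h₃ := hA.2.2.1 (i + 1)
  simp only [sub_add_cancel, add_sub_cancel_right] at h₁ h₃
  rw [h₁, hA.2.1 i, h₃]

theorem apply_window_sub (hA : IsTridiag A α β γ) (n : ℕ) (k : ℤ) (x : L2Z) :
    A (window n k x) - window n k (A x) =
      lp.single 2 (k + n + 1) (α (k + n) * x (k + n)) - lp.single 2 (k + 1) (α k * x k)
        + lp.single 2 k (γ (k + 1) * x (k + 1))
        - lp.single 2 (k + n) (γ (k + n + 1) * x (k + n + 1)) := by
  ext i
  simp only [lp.coeFn_sub, lp.coeFn_add, Pi.sub_apply, Pi.add_apply, hA.apply_apply,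
    window_apply, lp.single_apply, Pi.single_apply]
  -- for `n ≤ 1` some of the four boundary positions coincide
  rcases n with _ | _ | n <;> push_cast <;> split_ifs <;> first | omega | (subst_vars; ring_nf)

theorem norm_apply_window_sub_le (hA : IsTridiag A α β γ) (n : ℕ) (k : ℤ) (x : L2Z) :
    ‖A (window n k x) - window n k (A x)‖ ≤
      (‖α‖ + ‖γ‖) * (‖x k‖ + ‖x (k + 1)‖ + ‖x (k + n)‖ + ‖x (k + n + 1)‖) := by
  have hα : ∀ j, ‖α j‖ ≤ ‖α‖ + ‖γ‖ := fun j =>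
    (lp.norm_apply_le_norm ENNReal.top_ne_zero α j).trans (le_add_of_nonneg_right (norm_nonneg _))
  have hγ : ∀ j, ‖γ j‖ ≤ ‖α‖ + ‖γ‖ := fun j =>
    (lp.norm_apply_le_norm ENNReal.top_ne_zero γ j).trans (le_add_of_nonneg_left (norm_nonneg _))
  rw [hA.apply_window_sub]
  refine (norm_sub_le_of_le (norm_add_le_of_le (norm_sub_le _ _) le_rfl) le_rfl).trans ?_
  simp only [lp.norm_single two_pos, norm_mul]
  have := mul_le_mul_of_nonneg_right (hα (k + n)) (norm_nonneg (x (k + n)))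
  have := mul_le_mul_of_nonneg_right (hα k) (norm_nonneg (x k))
  have := mul_le_mul_of_nonneg_right (hγ (k + 1)) (norm_nonneg (x (k + 1)))
  have := mul_le_mul_of_nonneg_right (hγ (k + n + 1)) (norm_nonneg (x (k + n + 1)))
  linarith

theorem tsum_norm_apply_window_sq_le (hA : IsTridiag A α β γ) (n : ℕ) (x : L2Z) :
    (Summable fun k => ‖A (window n k x)‖ ^ 2) ∧
      ∑' k, ‖A (window n k x)‖ ^ 2 ≤ (√n * ‖A x‖ + 4 * (‖α‖ + ‖γ‖) * ‖x‖) ^ 2 := by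
  set M := ‖α‖ + ‖γ‖
  set a : ℤ → ℝ := fun k => ‖window n k (A x)‖
  set u : ℤ → ℝ := fun k => ‖x k‖ + ‖x (k + 1)‖ + ‖x (k + n)‖ + ‖x (k + n + 1)‖
  have hle : ∀ k, ‖A (window n k x)‖ ≤ a k + M * u k := fun k =>
    (norm_le_norm_add_norm_sub' _ _).trans (add_le_add le_rfl (hA.norm_apply_window_sub_le n k x))
  have ha := hasSum_norm_window_sq n (A x)
  have hu : (Summable fun k => u k ^ 2) ∧ ∑' k, u k ^ 2 ≤ (4 * ‖x‖) ^ 2 := by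
    have := lp.tsum_sq_sum_norm_comp_add_le x Finset.univ ![0, 1, (n : ℤ), n + 1]
    simpa [Fin.sum_univ_four, u, add_assoc] using this
  have hMu : Summable fun k => (M * u k) ^ 2 := by
    simpa only [mul_pow] using hu.1.mul_left (M ^ 2)
  obtain ⟨hsum, hmink⟩ := Real.L2_add_le_tsum_of_nonneg (fun k => norm_nonneg _)
    (fun k => by positivity) ha.summable hMu
  have hsq : ∀ k, ‖A (window n k x)‖ ^ 2 ≤ (a k + M * u k) ^ 2 := fun k =>
    pow_le_pow_left₀ (norm_nonneg _) (hle k) 2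
  have ha' : √(∑' k, a k ^ 2) = √n * ‖A x‖ := by
    rw [ha.tsum_eq, Real.sqrt_mul (Nat.cast_nonneg n), Real.sqrt_sq (norm_nonneg _)]
  have hMu' : √(∑' k, (M * u k) ^ 2) ≤ 4 * M * ‖x‖ := by
    simp only [mul_pow, tsum_mul_left]
    rw [Real.sqrt_mul (by positivity), Real.sqrt_sq (by positivity)]
    calc M * √(∑' k, u k ^ 2) ≤ M * (4 * ‖x‖) :=
          mul_le_mul_of_nonneg_left (Real.sqrt_le_iff.mpr ⟨by positivity, hu.2⟩) (by positivity)
      _ = 4 * M * ‖x‖ := by ring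
  have hAw := hsum.of_nonneg_of_le (fun k => sq_nonneg _) hsq
  refine ⟨hAw, (hAw.tsum_le_tsum hsq hsum).trans ?_⟩
  exact (Real.sqrt_le_iff.mp (hmink.trans (add_le_add ha'.le hMu'))).2

theorem nuN_le_norm_apply_add (hA : IsTridiag A α β γ) {n : ℕ} (hn : 1 ≤ n) {x : L2Z}
    (hx : ‖x‖ = 1) : nuN A n ≤ ‖A x‖ + 4 * (‖α‖ + ‖γ‖) / √n := by
  set s := ‖A x‖ + 4 * (‖α‖ + ‖γ‖) / √n
  have hn' : (0 : ℝ) < n := Nat.cast_pos.mpr hn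
  obtain ⟨hsum, hbound⟩ := hA.tsum_norm_apply_window_sq_le n x
  have hbound' : ∑' k, ‖A (window n k x)‖ ^ 2 ≤ s ^ 2 * (n * ‖x‖ ^ 2) := by
    have hscaled : √n * s = √n * ‖A x‖ + 4 * (‖α‖ + ‖γ‖) * ‖x‖ := by
      rw [hx, mul_one, mul_add, mul_div_cancel₀ _ (Real.sqrt_pos.mpr hn').ne']
    calc _ ≤ (√n * s) ^ 2 := hscaled ▸ hbound
      _ = s ^ 2 * (n * ‖x‖ ^ 2) := by rw [hx, mul_pow, Real.sq_sqrt hn'.le]; ring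
  obtain ⟨k, hk, hle⟩ := exists_pos_le_mul_of_hasSum (fun k => sq_nonneg _) (fun k => sq_nonneg _)
    (hasSum_norm_window_sq n x) hsum.hasSum (by rw [hx]; positivity) hbound'
  have hw : window n k x ≠ 0 := fun h => by simp [h] at hk
  calc nuN A n ≤ ‖A (window n k x)‖ / ‖window n k x‖ :=
        nuN_le_norm_apply_div_norm A hw (window_support_subset n k x)
    _ ≤ s := by
        rw [div_le_iff₀ (norm_pos_iff.mpr hw)]
        exact pow_le_pow_iff_left₀ (norm_nonneg _) (by positivity) two_ne_zero |>.mp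
          (by rwa [mul_pow])

theorem nuN_le_lowerNorm_add (hA : IsTridiag A α β γ) {n : ℕ} (hn : 1 ≤ n) :
    nuN A n ≤ lowerNorm A + 4 * (‖α‖ + ‖γ‖) / √n := by
  rw [← sub_le_iff_le_add]
  refine le_csInf ⟨_, lp.single 2 0 1, by simp, rfl⟩ fun r ⟨x, hx, hr⟩ => ?_
  rw [hr, sub_le_iff_le_add]
  exact hA.nuN_le_norm_apply_add hn hx

end IsTridiag

theorem nuN_tendsto_lowerNorm
    (A : L2Z →L[ℂ] L2Z) (α β γ : lp (fun _ : ℤ => ℂ) ⊤) (hA : IsTridiag A α β γ) :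
    Filter.Tendsto (fun n : ℕ => nuN A n) Filter.atTop (nhds (lowerNorm A)) := by
  have hupper : Tendsto (fun n : ℕ => lowerNorm A + 4 * (‖α‖ + ‖γ‖) / √n) atTop
      (𝓝 (lowerNorm A)) := by
    simpa using tendsto_const_nhds.add <| tendsto_const_nhds.div_atTop <|
      Real.tendsto_sqrt_atTop.comp tendsto_natCast_atTop_atTop
  refine tendsto_of_tendsto_of_tendsto_of_le_of_le' tendsto_const_nhds hupper ?_ ?_ <;>
    filter_upwards [eventually_ge_atTop 1] with n hn
  exacts [lowerNorm_le_nuN A hn, hA.nuN_le_lowerNorm_add hn]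
end
end

section
/- Let A be a bounded band operator on ℓ²(ℤ,ℂ) of bandwidth w. Let A₋ be the bounded operator on ℓ²({…,−2,−1},ℂ) with matrix entries (A_{i,j})_{i,j ≤ −1}, and let A₊ be the bounded operator on ℓ²({1,2,…},ℂ) with matrix entries (A_{i,j})_{i,j ≥ 1}. Then spess(A) = spess(A₋) ∪ spess(A₊). -/
noncomputable section

/-- The essential spectrum: λ such that `B - λI` is not invertible modulo compact operators. -/
def essSpec {H : Type*} [NormedAddCommGroup H] [NormedSpace ℂ H] (B : H →L[ℂ] H) : Set ℂ :=
  {z : ℂ | ¬ ∃ C : H →L[ℂ] H,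
    IsCompactOperator (⇑(C.comp (B - z • (1 : H →L[ℂ] H)) - 1)) ∧
    IsCompactOperator (⇑((B - z • (1 : H →L[ℂ] H)).comp C - 1))}

abbrev L2Neg : Type := lp (fun _ : {i : ℤ // i ≤ -1} => ℂ) 2
abbrev L2Pos : Type := lp (fun _ : {i : ℤ // 1 ≤ i} => ℂ) 2

/-! Write `J₋, J₊` for extension by zero from the two half-lines and `R₋, R₊` for restriction to
them, so that `A₋ = R₋ A J₋` and `A₊ = R₊ A J₊`. Then `A - (J₋ A₋ R₋ + J₊ A₊ R₊)` is compact: besides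
terms through the rank-one projection `1 - J₋R₋ - J₊R₊` onto the coordinate `0`, it consists of the
two off-diagonal corners, which by bandedness have only finitely many nonzero columns. Parametrices
of `A₋ - λ` and `A₊ - λ` assemble into one of the block sum, and a parametrix of the block sum
compresses to parametrices of each block. -/

section InvertibleModCompact

variable {H H₁ H₂ : Type*} [NormedAddCommGroup H] [NormedSpace ℂ H]
  [NormedAddCommGroup H₁] [NormedSpace ℂ H₁] [NormedAddCommGroup H₂] [NormedSpace ℂ H₂]

def IsInvertibleModCompact (T : H →L[ℂ] H) : Prop :=
  ∃ C : H →L[ℂ] H, IsCompactOperator ⇑(C ∘L T - 1) ∧ IsCompactOperator ⇑(T ∘L C - 1)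

lemma mem_essSpec_iff {B : H →L[ℂ] H} {z : ℂ} :
    z ∈ essSpec B ↔ ¬ IsInvertibleModCompact (B - z • 1) :=
  Iff.rfl

lemma IsInvertibleModCompact.add_isCompactOperator {T K : H →L[ℂ] H}
    (hT : IsInvertibleModCompact T) (hK : IsCompactOperator ⇑K) :
    IsInvertibleModCompact (T + K) := by
  obtain ⟨C, hCT, hTC⟩ := hT
  refine ⟨C, ?_, ?_⟩
  · rw [ContinuousLinearMap.comp_add, add_sub_right_comm]
    exact hCT.add (hK.clm_comp C)
  · rw [ContinuousLinearMap.add_comp, add_sub_right_comm]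
    exact hTC.add (hK.comp_clm C)

lemma essSpec_eq_of_isCompactOperator_sub {B B' : H →L[ℂ] H} (h : IsCompactOperator ⇑(B - B')) :
    essSpec B = essSpec B' := by
  have h' : IsCompactOperator ⇑(B' - B) := by
    rw [← neg_sub]
    exact h.neg
  ext z
  rw [mem_essSpec_iff, mem_essSpec_iff, not_iff_not]
  constructor
  · intro hB
    simpa using hB.add_isCompactOperator h'
  · intro hB'
    simpa using hB'.add_isCompactOperator h

lemma IsInvertibleModCompact.of_intertwining {T : H →L[ℂ] H} {T₁ : H₁ →L[ℂ] H₁}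
    (J : H₁ →L[ℂ] H) (R : H →L[ℂ] H₁) (hRJ : ∀ x, R (J x) = x)
    (hTJ : ∀ x, T (J x) = J (T₁ x)) (hRT : ∀ x, R (T x) = T₁ (R x))
    (hT : IsInvertibleModCompact T) : IsInvertibleModCompact T₁ := by
  obtain ⟨C, hCT, hTC⟩ := hT
  refine ⟨R ∘L C ∘L J, ?_, ?_⟩
  · have : (R ∘L C ∘L J) ∘L T₁ - 1 = R ∘L (C ∘L T - 1) ∘L J := by
      ext x; simp [hTJ, hRJ]
    rw [this]
    exact (hCT.comp_clm J).clm_comp R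
  · have : T₁ ∘L R ∘L C ∘L J - 1 = R ∘L (T ∘L C - 1) ∘L J := by
      ext x; simp [hRT, hRJ]
    rw [this]
    exact (hTC.comp_clm J).clm_comp R

lemma IsInvertibleModCompact.blockDiag {T₁ : H₁ →L[ℂ] H₁} {T₂ : H₂ →L[ℂ] H₂}
    (J₁ : H₁ →L[ℂ] H) (R₁ : H →L[ℂ] H₁) (J₂ : H₂ →L[ℂ] H) (R₂ : H →L[ℂ] H₂)
    (hR₁J₁ : ∀ x, R₁ (J₁ x) = x) (hR₂J₂ : ∀ x, R₂ (J₂ x) = x)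
    (hR₁J₂ : ∀ x, R₁ (J₂ x) = 0) (hR₂J₁ : ∀ x, R₂ (J₁ x) = 0)
    (hK : IsCompactOperator ⇑(1 - J₁ ∘L R₁ - J₂ ∘L R₂))
    (hT₁ : IsInvertibleModCompact T₁) (hT₂ : IsInvertibleModCompact T₂) :
    IsInvertibleModCompact (J₁ ∘L T₁ ∘L R₁ + J₂ ∘L T₂ ∘L R₂) := by
  obtain ⟨C₁, hCT₁, hTC₁⟩ := hT₁
  obtain ⟨C₂, hCT₂, hTC₂⟩ := hT₂
  refine ⟨J₁ ∘L C₁ ∘L R₁ + J₂ ∘L C₂ ∘L R₂, ?_, ?_⟩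
  · have : (J₁ ∘L C₁ ∘L R₁ + J₂ ∘L C₂ ∘L R₂) ∘L (J₁ ∘L T₁ ∘L R₁ + J₂ ∘L T₂ ∘L R₂) - 1 =
        J₁ ∘L (C₁ ∘L T₁ - 1) ∘L R₁ + J₂ ∘L (C₂ ∘L T₂ - 1) ∘L R₂ - (1 - J₁ ∘L R₁ - J₂ ∘L R₂) := by
      ext x
      simp only [add_apply, sub_apply, one_apply_eq_self, ContinuousLinearMap.comp_apply,
        map_add, map_sub, hR₁J₁, hR₂J₂, hR₁J₂, hR₂J₁, map_zero]
      abel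
    rw [this]
    exact (((hCT₁.comp_clm R₁).clm_comp J₁).add ((hCT₂.comp_clm R₂).clm_comp J₂)).sub hK
  · have : (J₁ ∘L T₁ ∘L R₁ + J₂ ∘L T₂ ∘L R₂) ∘L (J₁ ∘L C₁ ∘L R₁ + J₂ ∘L C₂ ∘L R₂) - 1 =
        J₁ ∘L (T₁ ∘L C₁ - 1) ∘L R₁ + J₂ ∘L (T₂ ∘L C₂ - 1) ∘L R₂ - (1 - J₁ ∘L R₁ - J₂ ∘L R₂) := by
      ext x
      simp only [add_apply, sub_apply, one_apply_eq_self, ContinuousLinearMap.comp_apply,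
        map_add, map_sub, hR₁J₁, hR₂J₂, hR₁J₂, hR₂J₁, map_zero]
      abel
    rw [this]
    exact (((hTC₁.comp_clm R₁).clm_comp J₁).add ((hTC₂.comp_clm R₂).clm_comp J₂)).sub hK

lemma essSpec_blockDiag (B₁ : H₁ →L[ℂ] H₁) (B₂ : H₂ →L[ℂ] H₂)
    (J₁ : H₁ →L[ℂ] H) (R₁ : H →L[ℂ] H₁) (J₂ : H₂ →L[ℂ] H) (R₂ : H →L[ℂ] H₂)
    (hR₁J₁ : ∀ x, R₁ (J₁ x) = x) (hR₂J₂ : ∀ x, R₂ (J₂ x) = x)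
    (hR₁J₂ : ∀ x, R₁ (J₂ x) = 0) (hR₂J₁ : ∀ x, R₂ (J₁ x) = 0)
    (hK : IsCompactOperator ⇑(1 - J₁ ∘L R₁ - J₂ ∘L R₂)) :
    essSpec (J₁ ∘L B₁ ∘L R₁ + J₂ ∘L B₂ ∘L R₂) = essSpec B₁ ∪ essSpec B₂ := by
  ext z
  rw [Set.mem_union, mem_essSpec_iff, mem_essSpec_iff, mem_essSpec_iff, ← not_and_or,
    not_iff_not]
  constructor
  · intro hD
    exact ⟨hD.of_intertwining J₁ R₁ hR₁J₁ (by simp [hR₁J₁, hR₂J₁]) (by simp [hR₁J₁, hR₁J₂]),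
      hD.of_intertwining J₂ R₂ hR₂J₂ (by simp [hR₂J₂, hR₁J₂]) (by simp [hR₂J₂, hR₂J₁])⟩
  · rintro ⟨h₁, h₂⟩
    have hD : J₁ ∘L B₁ ∘L R₁ + J₂ ∘L B₂ ∘L R₂ - z • 1 =
        J₁ ∘L (B₁ - z • 1) ∘L R₁ + J₂ ∘L (B₂ - z • 1) ∘L R₂ + (-z) • (1 - J₁ ∘L R₁ - J₂ ∘L R₂) := by
      ext x
      simp only [add_apply, sub_apply, smul_apply, one_apply_eq_self,
        ContinuousLinearMap.comp_apply, map_sub, map_smul]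
      module
    rw [hD]
    exact (h₁.blockDiag J₁ R₁ J₂ R₂ hR₁J₁ hR₂J₂ hR₁J₂ hR₂J₁ hK h₂).add_isCompactOperator
      (hK.smul (-z))

end InvertibleModCompact

open scoped lp InnerProductSpace ENNReal

namespace lp

section Restriction

variable {ι : Type*} (p : ι → Prop)

lemma sum_rpow_subtype_le_norm_rpow (x : ℓ²(ι, ℂ)) (s : Finset (Subtype p)) :
    ∑ i ∈ s, ‖x i‖ ^ (2 : ℝ≥0∞).toReal ≤ ‖x‖ ^ (2 : ℝ≥0∞).toReal := by
  simpa using lp.sum_rpow_le_norm_rpow (by norm_num) x (s.map (Function.Embedding.subtype p))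

def restrict : ℓ²(ι, ℂ) →L[ℂ] ℓ²(Subtype p, ℂ) :=
  LinearMap.mkContinuous
    { toFun x := ⟨fun i => x i, memℓp_gen' (sum_rpow_subtype_le_norm_rpow p x)⟩
      map_add' _ _ := rfl
      map_smul' _ _ := rfl }
    1 fun x => by
      rw [one_mul]
      exact lp.norm_le_of_forall_sum_le (by norm_num) (norm_nonneg x)
        (sum_rpow_subtype_le_norm_rpow p x)

@[simp]
lemma restrict_apply (x : ℓ²(ι, ℂ)) (i : Subtype p) : restrict p x i = x i := rfl

variable [DecidablePred p]

lemma sum_rpow_extendByZero_le_norm_rpow (x : ℓ²(Subtype p, ℂ)) (s : Finset ι) :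
    ∑ i ∈ s, ‖if h : p i then x ⟨i, h⟩ else 0‖ ^ (2 : ℝ≥0∞).toReal ≤ ‖x‖ ^ (2 : ℝ≥0∞).toReal := by
  calc ∑ i ∈ s, ‖if h : p i then x ⟨i, h⟩ else 0‖ ^ (2 : ℝ≥0∞).toReal
      = ∑ i ∈ s with p i, ‖if h : p i then x ⟨i, h⟩ else 0‖ ^ (2 : ℝ≥0∞).toReal := by
        refine (Finset.sum_filter_of_ne fun i _ hi => ?_).symm
        by_contra hpi
        simp [hpi] at hi
    _ = ∑ i ∈ s.subtype p, ‖x i‖ ^ (2 : ℝ≥0∞).toReal := by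
        rw [← Finset.sum_subtype_eq_sum_filter]
        exact Finset.sum_congr rfl fun i _ => by simp [i.2]
    _ ≤ ‖x‖ ^ (2 : ℝ≥0∞).toReal := lp.sum_rpow_le_norm_rpow (by norm_num) x _

def extendByZero : ℓ²(Subtype p, ℂ) →L[ℂ] ℓ²(ι, ℂ) :=
  LinearMap.mkContinuous
    { toFun x := ⟨fun i => if h : p i then x ⟨i, h⟩ else 0,
        memℓp_gen' (sum_rpow_extendByZero_le_norm_rpow p x)⟩
      map_add' x y := by
        ext i
        change _ = (if h : p i then x ⟨i, h⟩ else 0) + (if h : p i then y ⟨i, h⟩ else 0)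
        by_cases h : p i <;> simp [h]
      map_smul' c x := by ext i; by_cases h : p i <;> simp [h] }
    1 fun x => by
      rw [one_mul]
      exact lp.norm_le_of_forall_sum_le (by norm_num) (norm_nonneg x)
        (sum_rpow_extendByZero_le_norm_rpow p x)

@[simp]
lemma extendByZero_apply (x : ℓ²(Subtype p, ℂ)) (i : ι) :
    extendByZero p x i = if h : p i then x ⟨i, h⟩ else 0 := rfl

@[simp]
lemma restrict_extendByZero (x : ℓ²(Subtype p, ℂ)) : restrict p (extendByZero p x) = x := by
  ext i
  simp [i.2]

lemma restrict_extendByZero_of_disjoint {q : ι → Prop} (hqp : ∀ i, q i → ¬ p i)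
    (x : ℓ²(Subtype p, ℂ)) : restrict q (extendByZero p x) = 0 := by
  ext i
  simp [hqp i i.2]

lemma extendByZero_restrict_apply (x : ℓ²(ι, ℂ)) (i : ι) :
    extendByZero p (restrict p x) i = if p i then x i else 0 := by
  simp [dite_eq_ite]

end Restriction

section Single

variable {ι : Type*} [DecidableEq ι]

lemma inner_single_one_left (i : ι) (f : ℓ²(ι, ℂ)) : ⟪lp.single 2 i (1 : ℂ), f⟫_ℂ = f i := by
  simp [lp.inner_single_left]

lemma continuousLinearMap_ext_single {F : Type*} [AddCommMonoid F] [Module ℂ F]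
    [TopologicalSpace F] [T2Space F] {f g : ℓ²(ι, ℂ) →L[ℂ] F}
    (h : ∀ i, f (lp.single 2 i 1) = g (lp.single 2 i 1)) : f = g :=
  lp.ext_continuousLinearMap (by norm_num) fun i =>
    ContinuousLinearMap.ext_ring (by simpa using h i)

lemma isCompactOperator_of_apply_single_eq_zero {F : Type*} [NormedAddCommGroup F]
    [NormedSpace ℂ F] (B : ℓ²(ι, ℂ) →L[ℂ] F) (s : Finset ι)
    (h : ∀ j ∉ s, B (lp.single 2 j 1) = 0) : IsCompactOperator B := by
  have hB : B = ∑ j ∈ s, (innerSL ℂ (lp.single 2 j (1 : ℂ))).smulRight (B (lp.single 2 j 1)) := by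
    refine continuousLinearMap_ext_single fun i => ?_
    simp only [_root_.sum_apply, ContinuousLinearMap.smulRight_apply, innerSL_apply_apply,
      inner_single_one_left, lp.single_apply, Pi.single_apply, ite_smul, one_smul, zero_smul,
      Finset.sum_ite_eq']
    split_ifs with hi
    · rfl
    · exact h i hi
  have hrank_one : ∀ j ∈ s, (innerSL ℂ (lp.single 2 j (1 : ℂ))).smulRight (B (lp.single 2 j 1)) ∈
      compactOperator (RingHom.id ℂ) ℓ²(ι, ℂ) F := fun j _ =>
    ((isCompactOperator_of_locallyCompactSpace_rng
      ((1 : ℂ →L[ℂ] ℂ).smulRight (B (lp.single 2 j 1)))).comp_clm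
      (innerSL ℂ (lp.single 2 j 1 : ℓ²(ι, ℂ))) :)
  rw [hB]
  exact Submodule.sum_mem _ hrank_one

variable (p : ι → Prop) [DecidablePred p]

lemma extendByZero_single (j : Subtype p) :
    extendByZero p (lp.single 2 j 1) = lp.single 2 (j : ι) (1 : ℂ) := by
  ext i
  by_cases hi : p i
  · simp [hi, lp.single_apply, Pi.single_apply, ← Subtype.val_inj]
  · have : i ≠ j := fun h => hi (h ▸ j.2)
    simp [hi, lp.single_apply, this]

variable {p} {q : ι → Prop}

lemma eq_restrict_comp_comp_extendByZero (A : ℓ²(ι, ℂ) →L[ℂ] ℓ²(ι, ℂ))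
    (B : ℓ²(Subtype p, ℂ) →L[ℂ] ℓ²(Subtype q, ℂ))
    (hB : ∀ (i : Subtype q) (j : Subtype p), ⟪lp.single 2 i (1 : ℂ), B (lp.single 2 j 1)⟫_ℂ =
      ⟪lp.single 2 (i : ι) (1 : ℂ), A (lp.single 2 (j : ι) 1)⟫_ℂ) :
    B = restrict q ∘L A ∘L extendByZero p := by
  refine continuousLinearMap_ext_single fun j => ?_
  ext i
  simpa [inner_single_one_left, extendByZero_single] using hB i j

lemma isCompactOperator_restrict_comp_comp_extendByZero (A : ℓ²(ι, ℂ) →L[ℂ] ℓ²(ι, ℂ))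
    (s : Finset ι)
    (hA : ∀ i j, q i → p j → j ∉ s → ⟪lp.single 2 i (1 : ℂ), A (lp.single 2 j 1)⟫_ℂ = 0) :
    IsCompactOperator (restrict q ∘L A ∘L extendByZero p) := by
  refine isCompactOperator_of_apply_single_eq_zero _ (s.subtype p) fun j hj => ?_
  ext i
  simpa [inner_single_one_left, extendByZero_single] using
    hA i j i.2 j.2 (by simpa using hj)

end Single

end lp

local notation "J₋" => lp.extendByZero (fun i : ℤ => i ≤ -1)
local notation "R₋" => lp.restrict (fun i : ℤ => i ≤ -1)
local notation "J₊" => lp.extendByZero (fun i : ℤ => 1 ≤ i)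
local notation "R₊" => lp.restrict (fun i : ℤ => 1 ≤ i)

lemma isCompactOperator_one_sub_extendByZero_comp_restrict :
    IsCompactOperator ⇑(1 - J₋ ∘L R₋ - J₊ ∘L R₊ : L2Z →L[ℂ] L2Z) := by
  refine lp.isCompactOperator_of_apply_single_eq_zero _ {0} fun j hj => ?_
  rw [Finset.mem_singleton] at hj
  ext i
  simp only [_root_.sub_apply, one_apply_eq_self,
    ContinuousLinearMap.comp_apply, lp.coeFn_sub, Pi.sub_apply, lp.extendByZero_restrict_apply,
    lp.single_apply, Pi.single_apply, lp.coeFn_zero, Pi.zero_apply]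
  split_ifs <;> first | omega | simp

lemma isCompactOperator_sub_blockDiag_of_band (w : ℕ) (A : L2Z →L[ℂ] L2Z)
    (hband : ∀ i j : ℤ, (w : ℤ) < |i - j| → ent A i j = 0) :
    IsCompactOperator ⇑(A - (J₋ ∘L (R₋ ∘L A ∘L J₋) ∘L R₋ + J₊ ∘L (R₊ ∘L A ∘L J₊) ∘L R₊)) := by
  set K : L2Z →L[ℂ] L2Z := 1 - J₋ ∘L R₋ - J₊ ∘L R₊ with hK_def
  have hK : IsCompactOperator K := isCompactOperator_one_sub_extendByZero_comp_restrict
  have hnegpos : IsCompactOperator (R₋ ∘L A ∘L J₊) :=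
    lp.isCompactOperator_restrict_comp_comp_extendByZero A (Finset.Icc 1 (w : ℤ))
      fun i j hi hj hjs => hband i j <| lt_abs.mpr <| by rw [Finset.mem_Icc] at hjs; omega
  have hposneg : IsCompactOperator (R₊ ∘L A ∘L J₋) :=
    lp.isCompactOperator_restrict_comp_comp_extendByZero A (Finset.Icc (-(w : ℤ)) (-1))
      fun i j hi hj hjs => hband i j <| lt_abs.mpr <| by rw [Finset.mem_Icc] at hjs; omega
  have hdecomp : A - (J₋ ∘L (R₋ ∘L A ∘L J₋) ∘L R₋ + J₊ ∘L (R₊ ∘L A ∘L J₊) ∘L R₊) =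
      K ∘L A + ((J₋ ∘L R₋ + J₊ ∘L R₊) ∘L A) ∘L K + J₋ ∘L (R₋ ∘L A ∘L J₊) ∘L R₊ +
        J₊ ∘L (R₊ ∘L A ∘L J₋) ∘L R₋ := by
    ext1 x
    simp only [hK_def, add_apply, sub_apply, one_apply_eq_self, ContinuousLinearMap.comp_apply,
      map_sub]
    abel
  rw [hdecomp]
  have h₁ : IsCompactOperator ⇑(K ∘L A) := hK.comp_clm A
  have h₂ : IsCompactOperator ⇑(((J₋ ∘L R₋ + J₊ ∘L R₊) ∘L A) ∘L K) :=
    hK.clm_comp ((J₋ ∘L R₋ + J₊ ∘L R₊) ∘L A)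
  have h₃ : IsCompactOperator ⇑(J₋ ∘L (R₋ ∘L A ∘L J₊) ∘L R₊) := (hnegpos.comp_clm R₊).clm_comp J₋
  have h₄ : IsCompactOperator ⇑(J₊ ∘L (R₊ ∘L A ∘L J₋) ∘L R₋) := (hposneg.comp_clm R₋).clm_comp J₊
  exact ((h₁.add h₂).add h₃).add h₄

theorem essential_spectrum_splits
    (w : ℕ) (A : L2Z →L[ℂ] L2Z)
    (hband : ∀ i j : ℤ, (w : ℤ) < |i - j| → ent A i j = 0)
    (Am : L2Neg →L[ℂ] L2Neg)
    (hAm : ∀ i j : {i : ℤ // i ≤ -1},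
      (inner ℂ (lp.single 2 i (1:ℂ)) (Am (lp.single 2 j 1)) : ℂ) = ent A i j)
    (Ap : L2Pos →L[ℂ] L2Pos)
    (hAp : ∀ i j : {i : ℤ // 1 ≤ i},
      (inner ℂ (lp.single 2 i (1:ℂ)) (Ap (lp.single 2 j 1)) : ℂ) = ent A i j) :
    essSpec A = essSpec Am ∪ essSpec Ap := by
  have hAm' : Am = R₋ ∘L A ∘L J₋ := lp.eq_restrict_comp_comp_extendByZero A Am hAm
  have hAp' : Ap = R₊ ∘L A ∘L J₊ := lp.eq_restrict_comp_comp_extendByZero A Ap hAp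
  calc essSpec A = essSpec (J₋ ∘L Am ∘L R₋ + J₊ ∘L Ap ∘L R₊) := by
        rw [hAm', hAp']
        exact essSpec_eq_of_isCompactOperator_sub
          (isCompactOperator_sub_blockDiag_of_band w A hband)
    _ = essSpec Am ∪ essSpec Ap :=
        essSpec_blockDiag Am Ap J₋ R₋ J₊ R₊
          (lp.restrict_extendByZero _) (lp.restrict_extendByZero _)
          (lp.restrict_extendByZero_of_disjoint _ fun i hi hi' => by omega)
          (lp.restrict_extendByZero_of_disjoint _ fun i hi hi' => by omega)
          isCompactOperator_one_sub_extendByZero_comp_restrict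
end
end
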